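/- Let T be a finite tree with a designated root, g_e > 0 strictly positive conductances on its edges, K = K_{1/g} the path-sum matrix with weights 1/g_e, and Σ_p a symmetric matrix indexed by the non-root vertices with all entries strictly positive. Set Σ_ε = K Σ_p K. Then for any non-root vertex a whose parent b is also non-root: Σ_ε(a,b) > Σ_ε(b,b). -/

import Mathlib

open Classical

/-- A finite tree with a designated root vertex (the slack bus). -/
structure GridTree (V : Type*) [Fintype V] [DecidableEq V] where
  graph : SimpleGraph V
  root : V
  isTree : graph.IsTree

namespace GridTree

variable {V : Type*} [Fintype V] [DecidableEq V] (T : GridTree V)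

/-- The unique path (as a walk) from a vertex to the root. -/
noncomputable def pathToRoot (a : V) : T.graph.Walk a T.root :=
  (T.isTree.existsUnique_path a T.root).choose

/-- `E_a`: the set of edges on the unique path from `a` to the root. -/
noncomputable def pathEdges (a : V) : Finset (Sym2 V) :=
  (T.pathToRoot a).edges.toFinset

/-- `c` is a descendant of `a`: `a` lies on the unique path from `c` to the root
(in particular every vertex is a descendant of itself). -/
def Descendant (c a : V) : Prop := a ∈ (T.pathToRoot c).support

/-- `b` is the parent of `a`: the edge `{a, b}` lies on the path from `a` to the root
(equivalently, `b` is the unique neighbor of `a` on that path). -/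
noncomputable def IsParent (a b : V) : Prop := s(a, b) ∈ T.pathEdges a

/-- The path-sum matrix `K_w`, indexed by the non-root vertices:
`K_w(a,b) = ∑_{e ∈ E_a ∩ E_b} w_e`. -/
noncomputable def pathMatrix (w : Sym2 V → ℝ) :
    Matrix {v : V // v ≠ T.root} {v : V // v ≠ T.root} ℝ :=
  fun a b => ∑ e ∈ T.pathEdges a.1 ∩ T.pathEdges b.1, w e

/-- The reduced weighted graph Laplacian with edge weights `w`, indexed by the
non-root vertices (the row and column of the root are deleted). -/
noncomputable def lap (w : Sym2 V → ℝ) :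
    Matrix {v : V // v ≠ T.root} {v : V // v ≠ T.root} ℝ :=
  fun a b =>
    if a = b then ∑ c ∈ Finset.univ.filter (fun c => T.graph.Adj a.1 c), w s(a.1, c)
    else if T.graph.Adj a.1 b.1 then - w s(a.1, b.1) else 0

end GridTree

/-!
Write `K = K_{1/g}`. Since `E_a = E_b ∪ {ab}`, every entry of row `b` of `K` is at most the
corresponding entry of row `a`, and `K(b,a) < K(a,a)` because `K(a,a) - K(b,a) = 1/g_{ab} > 0`.
Multiplying by the entrywise positive `Σ_p` makes row `b` of `K Σ_p` strictly smaller than row `a`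
in every entry, and multiplying by the entrywise nonnegative `K`, whose entry `K(b,b)` is
positive, keeps the strict inequality in column `b`.
-/

namespace Matrix

variable {m n o R : Type*} [Fintype n] [Semiring R] [PartialOrder R] [IsStrictOrderedRing R]

theorem mul_apply_lt_mul_apply_of_row_le (A : Matrix m n R) {B : Matrix n o R}
    (hB : ∀ i j, 0 ≤ B i j) {x y : m} {z : o} (hrow : ∀ i, A y i ≤ A x i) {i₀ : n}
    (hi₀ : A y i₀ < A x i₀) (hB₀ : 0 < B i₀ z) : (A * B) y z < (A * B) x z := by
  simp only [mul_apply]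
  exact Finset.sum_lt_sum (fun i _ => mul_le_mul_of_nonneg_right (hrow i) (hB i z))
    ⟨i₀, Finset.mem_univ _, mul_lt_mul_of_pos_right hi₀ hB₀⟩

end Matrix

namespace GridTree

variable {V : Type*} [Fintype V] [DecidableEq V] (T : GridTree V)

theorem pathToRoot_isPath (a : V) : (T.pathToRoot a).IsPath :=
  (T.isTree.existsUnique_path a T.root).choose_spec.1

theorem pathToRoot_eq_of_isPath {a : V} {p : T.graph.Walk a T.root} (hp : p.IsPath) :
    p = T.pathToRoot a :=
  (T.isTree.existsUnique_path a T.root).choose_spec.2 p hp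

theorem pathEdges_subset_edgeSet (a : V) : ↑(T.pathEdges a) ⊆ T.graph.edgeSet := fun _ he =>
  (T.pathToRoot a).edges_subset_edgeSet (List.mem_toFinset.mp he)

theorem pathEdges_nonempty {a : V} (ha : a ≠ T.root) : (T.pathEdges a).Nonempty := by
  cases hq : T.pathToRoot a with
  | nil => exact absurd rfl ha
  | @cons _ c _ _ _ => exact ⟨s(a, c), by simp [pathEdges, hq]⟩

variable {T}

theorem IsParent.pathToRoot_eq {a b : V} (hab : T.IsParent a b) :
    ∃ h : T.graph.Adj a b, T.pathToRoot a = .cons h (T.pathToRoot b) := by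
  have hp := T.pathToRoot_isPath a
  have hmem : s(a, b) ∈ (T.pathToRoot a).edges := List.mem_toFinset.mp hab
  cases hq : T.pathToRoot a with
  | nil => simp [hq] at hmem
  | @cons _ c _ h q =>
    rw [hq, SimpleGraph.Walk.cons_isPath_iff] at hp
    rw [hq, SimpleGraph.Walk.edges_cons, List.mem_cons] at hmem
    -- the edge `ab` cannot lie on the tail `q`, which avoids `a`
    obtain rfl : b = c := hmem.resolve_right (fun h' => hp.2 (q.fst_mem_support_of_mem_edges h'))
      |> Sym2.congr_right.mp
    exact ⟨h, congrArg _ (T.pathToRoot_eq_of_isPath hp.1)⟩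

theorem IsParent.pathEdges_eq_insert {a b : V} (hab : T.IsParent a b) :
    T.pathEdges a = insert s(a, b) (T.pathEdges b) := by
  obtain ⟨_, heq⟩ := hab.pathToRoot_eq
  simp [pathEdges, heq]

theorem IsParent.not_mem_pathEdges {a b : V} (hab : T.IsParent a b) :
    s(a, b) ∉ T.pathEdges b := fun hmem => by
  obtain ⟨_, heq⟩ := hab.pathToRoot_eq
  have hp := T.pathToRoot_isPath a
  rw [heq, SimpleGraph.Walk.cons_isPath_iff] at hp
  exact hp.2 ((T.pathToRoot b).fst_mem_support_of_mem_edges (List.mem_toFinset.mp hmem))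

theorem IsParent.pathEdges_subset {a b : V} (hab : T.IsParent a b) :
    T.pathEdges b ⊆ T.pathEdges a :=
  hab.pathEdges_eq_insert ▸ Finset.subset_insert _ _

variable {w : Sym2 V → ℝ} {a b : {v : V // v ≠ T.root}}

theorem pathMatrix_apply_le_of_isParent (hw : ∀ e ∈ T.graph.edgeSet, 0 ≤ w e)
    (hab : T.IsParent a.1 b.1) (i : {v : V // v ≠ T.root}) :
    T.pathMatrix w b i ≤ T.pathMatrix w a i :=
  Finset.sum_le_sum_of_subset_of_nonneg (Finset.inter_subset_inter_right hab.pathEdges_subset)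
    fun e he _ => hw e (T.pathEdges_subset_edgeSet a.1 (Finset.mem_inter.mp he).1)

theorem pathMatrix_apply_lt_apply_self_of_isParent (hw : ∀ e ∈ T.graph.edgeSet, 0 < w e)
    (hab : T.IsParent a.1 b.1) : T.pathMatrix w b a < T.pathMatrix w a a := by
  have hab_edge : s(a.1, b.1) ∈ T.graph.edgeSet :=
    T.pathEdges_subset_edgeSet a.1 (hab.pathEdges_eq_insert ▸ Finset.mem_insert_self _ _)
  simp only [pathMatrix, Finset.inter_eq_left.mpr hab.pathEdges_subset, Finset.inter_self]
  rw [hab.pathEdges_eq_insert, Finset.sum_insert hab.not_mem_pathEdges]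
  exact lt_add_of_pos_left _ (hw _ hab_edge)

theorem pathMatrix_nonneg (hw : ∀ e ∈ T.graph.edgeSet, 0 ≤ w e)
    (a b : {v : V // v ≠ T.root}) : 0 ≤ T.pathMatrix w a b :=
  Finset.sum_nonneg fun e he => hw e (T.pathEdges_subset_edgeSet a.1 (Finset.mem_inter.mp he).1)

theorem pathMatrix_apply_self_pos (hw : ∀ e ∈ T.graph.edgeSet, 0 < w e)
    (a : {v : V // v ≠ T.root}) : 0 < T.pathMatrix w a a := by
  rw [pathMatrix, Finset.inter_self]
  exact Finset.sum_pos (fun e he => hw e (T.pathEdges_subset_edgeSet a.1 he))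
    (T.pathEdges_nonempty a.2)

end GridTree

theorem sigma_eps_parent_entry_gt_parent_diag_general
    {V : Type*} [Fintype V] [DecidableEq V] (T : GridTree V)
    (g : Sym2 V → ℝ) (hg : ∀ e ∈ T.graph.edgeSet, 0 < g e)
    (Sp : Matrix {v : V // v ≠ T.root} {v : V // v ≠ T.root} ℝ)
    (hpos : ∀ i j, 0 < Sp i j)
    (a b : {v : V // v ≠ T.root}) (hab : T.IsParent a.1 b.1) :
    (T.pathMatrix (fun e => (g e)⁻¹) * Sp * T.pathMatrix (fun e => (g e)⁻¹)) a b >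
      (T.pathMatrix (fun e => (g e)⁻¹) * Sp * T.pathMatrix (fun e => (g e)⁻¹)) b b := by
  have hw : ∀ e ∈ T.graph.edgeSet, 0 < (g e)⁻¹ := fun e he => inv_pos.mpr (hg e he)
  set K := T.pathMatrix fun e => (g e)⁻¹
  have hKSp : ∀ j, (K * Sp) b j < (K * Sp) a j := fun j =>
    K.mul_apply_lt_mul_apply_of_row_le (fun i j => (hpos i j).le)
      (T.pathMatrix_apply_le_of_isParent (fun e he => (hw e he).le) hab)
      (T.pathMatrix_apply_lt_apply_self_of_isParent hw hab) (hpos a j)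
  exact (K * Sp).mul_apply_lt_mul_apply_of_row_le
    (T.pathMatrix_nonneg fun e he => (hw e he).le) (fun j => (hKSp j).le) (hKSp b)
    (T.pathMatrix_apply_self_pos hw b)

/-- In the DC-resistive model `Σ_ε = K Σ_p K` with `K = K_{1/g}` and
`Σ_p` symmetric entrywise positive, for a non-root vertex `a` with non-root parent `b`:
`Σ_ε(a,b) > Σ_ε(b,b)`. -/
theorem sigma_eps_parent_entry_gt_parent_diag
    {V : Type*} [Fintype V] [DecidableEq V] (T : GridTree V)
    (g : Sym2 V → ℝ) (hg : ∀ e ∈ T.graph.edgeSet, 0 < g e)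
    (Sp : Matrix {v : V // v ≠ T.root} {v : V // v ≠ T.root} ℝ)
    (hsym : Sp.IsSymm) (hpos : ∀ i j, 0 < Sp i j)
    (a b : {v : V // v ≠ T.root}) (hab : T.IsParent a.1 b.1) :
    (T.pathMatrix (fun e => (g e)⁻¹) * Sp * T.pathMatrix (fun e => (g e)⁻¹)) a b >
      (T.pathMatrix (fun e => (g e)⁻¹) * Sp * T.pathMatrix (fun e => (g e)⁻¹)) b b :=
  sigma_eps_parent_entry_gt_parent_diag_general T g hg Sp hpos a b hab
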